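/- arXiv:1906.12053 — 3 statements merged into one kernel-verified Lean document; each statement's English description precedes it below -/
import Mathlib

section
/- For all n ≥ 1, the sum ∑_{k=0}^{n} k · C(2k, k) / 4^k equals (2n+1)! / (3 · 2^{2n} · n! · (n-1)!). -/
/-!
The partial sums have the closed form `n (2n+1) C(2n,n) / (3 · 4^n)`: its increment from `n` to
`n+1` is `(n+1) C(2n+2,n+1) / 4^(n+1)` thanks to `(n+1) C(2n+2,n+1) = 2 (2n+1) C(2n,n)`. For
`n ≥ 1`, `(2n+1)! / (n! (n-1)!) = n (2n+1) C(2n,n)` turns it into the stated factorial form.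
-/

open Finset Nat

theorem sum_range_succ_mul_centralBinom_div_four_pow {K : Type*} [Field K] [CharZero K] (n : ℕ) :
    ∑ k ∈ range (n + 1), (k : K) * centralBinom k / 4 ^ k =
      n * (2 * n + 1) * centralBinom n / (3 * 4 ^ n) := by
  induction n with
  | zero => simp
  | succ n ih =>
    have hrec : ((n + 1 : ℕ) : K) * centralBinom (n + 1) = 2 * (2 * n + 1) * centralBinom n := by
      exact_mod_cast succ_mul_centralBinom_succ n
    rw [sum_range_succ, ih]
    field_simp
    push_cast at hrec ⊢
    linear_combination (-2 * (n : K) * 4 ^ n) * hrec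

theorem factorial_two_mul_add_one (n : ℕ) :
    (2 * n + 1)! = (2 * n + 1) * centralBinom n * n ! * n ! := by
  rw [factorial_succ, centralBinom_eq_two_mul_choose, two_mul,
    ← add_choose_mul_factorial_mul_factorial]
  ring

theorem sum_k_central_binom_div_four_pow (n : ℕ) (hn : 1 ≤ n) :
    ∑ k ∈ Finset.range (n + 1), (k : ℚ) * (Nat.choose (2 * k) k : ℚ) / 4 ^ k =
      (Nat.factorial (2 * n + 1) : ℚ) /
        (3 * 2 ^ (2 * n) * (Nat.factorial n) * (Nat.factorial (n - 1))) := by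
  obtain ⟨m, rfl⟩ := exists_add_of_le hn
  simp only [← centralBinom_eq_two_mul_choose, sum_range_succ_mul_centralBinom_div_four_pow,
    factorial_two_mul_add_one, pow_mul, add_comm 1 m, factorial_succ]
  push_cast
  field_simp
  ring
end

section
/- Define c : ℕ → ℚ by c(2) = 2 and c(n) = 2n·c(n-1) + 2·(2n-2)!/(2^{n-1}·(n-1)!) for n ≥ 3. Then for all n ≥ 2, c(n) = 2^n · n! − (2n)!/(2^{n-1} · n!). -/
/-!
Both correction terms are odd double factorials: `(2n)! = (2n)‼ (2n-1)‼` and `(2n)‼ = 2ⁿ n!`, so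
the recurrence reads `c n = 2n c(n-1) + 2 (2n-3)‼` and the claim reads `c n = 2ⁿ n! - 2 (2n-1)‼`.
The induction step is then `2(n+1)(2ⁿ n! - 2 (2n-1)‼) + 2 (2n-1)‼ = 2ⁿ⁺¹ (n+1)! - 2 (2n+1)(2n-1)‼`.
-/

open Nat

theorem Nat.factorial_two_mul_eq (n : ℕ) : (2 * n)! = 2 ^ n * n ! * (2 * n - 1)‼ := by
  rcases n with _ | n
  · rfl
  · rw [show 2 * (n + 1) = 2 * n + 1 + 1 by ring, factorial_eq_mul_doubleFactorial,
      show 2 * n + 1 + 1 = 2 * (n + 1) by ring, doubleFactorial_two_mul]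
    rfl

theorem Nat.doubleFactorial_two_mul_succ_sub_one (n : ℕ) :
    (2 * (n + 1) - 1)‼ = (2 * n + 1) * (2 * n - 1)‼ := by
  rw [show 2 * (n + 1) - 1 = 2 * n + 1 by omega, doubleFactorial_add_one]

theorem factorial_two_mul_div (n : ℕ) : ((2 * n)! : ℚ) / (2 ^ n * n !) = (2 * n - 1)‼ := by
  rw [factorial_two_mul_eq]
  push_cast
  field_simp

theorem factorial_two_mul_div_two_pow_pred {n : ℕ} (hn : 1 ≤ n) :
    ((2 * n)! : ℚ) / (2 ^ (n - 1) * n !) = 2 * (2 * n - 1)‼ := by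
  rw [← factorial_two_mul_div, ← pow_sub_one_mul (by omega : n ≠ 0)]
  field_simp

theorem comparable_pairs_closed_form (c : ℕ → ℚ)
    (h2 : c 2 = 2)
    (hrec : ∀ n : ℕ, 3 ≤ n →
      c n = 2 * n * c (n - 1) +
        2 * (Nat.factorial (2 * n - 2) : ℚ) / (2 ^ (n - 1) * (Nat.factorial (n - 1)))) :
    ∀ n : ℕ, 2 ≤ n →
      c n = 2 ^ n * (Nat.factorial n : ℚ) -
        (Nat.factorial (2 * n) : ℚ) / (2 ^ (n - 1) * (Nat.factorial n)) := by
  have hstep : ∀ n, 2 ≤ n → c (n + 1) = 2 * (n + 1) * c n + 2 * ((2 * n - 1)‼ : ℚ) := by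
    intro n hn
    rw [hrec (n + 1) (by omega), Nat.add_sub_cancel, show 2 * (n + 1) - 2 = 2 * n by omega,
      mul_div_assoc, factorial_two_mul_div]
    push_cast
    rfl
  intro n hn
  rw [factorial_two_mul_div_two_pow_pred (by omega)]
  induction n, hn using Nat.le_induction with
  | base => rw [h2]; norm_num [factorial, doubleFactorial]
  | succ n hn ih =>
    rw [hstep n hn, ih, doubleFactorial_two_mul_succ_sub_one, factorial_succ, pow_succ]
    push_cast
    ring
end

section
/- Define a : ℕ → ℚ by a(2) = 2 and, for n ≥ 3, a(n) = 2(n-1)·a(n-1) + (3n-2)·(2n-3)!/(2^{n-2}·(n-2)!) − 2^{n-1}·(n-1)!. Then for all n ≥ 2, a(n) = (2n)!/(2^n·(n-1)!) − 2^{n-1}·n!. -/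
/-!
The inhomogeneous term and the closed form are governed by the odd double factorial: `(2m+1)! / (2^m m!) = (2m+1)‼`
and `(2m+2)! / (2^(m+1) m!) = (m+1) (2m+1)‼`. In these terms the closed form reads
`n (2n-1)‼ - 2^(n-1) n!`, and checking the recurrence reduces to the polynomial identity
`(m+2)(2m+3) = 2(m+1)^2 + (3m+4)` for the double-factorial part and `m+2 = (m+1) + 1` for the other.
-/

open Nat

theorem factorial_two_mul_add_one_eq (m : ℕ) : (2 * m + 1)! = 2 ^ m * m ! * (2 * m + 1)‼ := by
  rw [factorial_eq_mul_doubleFactorial, doubleFactorial_two_mul, mul_comm]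

theorem factorial_two_mul_add_two_eq (m : ℕ) :
    (2 * m + 2)! = 2 ^ (m + 1) * (m + 1)! * (2 * m + 1)‼ := by
  rw [factorial_eq_mul_doubleFactorial, show 2 * m + 1 + 1 = 2 * (m + 1) by ring,
    doubleFactorial_two_mul, mul_comm]

theorem cast_factorial_two_mul_add_one_div (m : ℕ) :
    ((2 * m + 1)! : ℚ) / (2 ^ m * m !) = (2 * m + 1)‼ := by
  rw [factorial_two_mul_add_one_eq]
  push_cast
  field_simp

theorem cast_factorial_two_mul_add_two_div (m : ℕ) :
    ((2 * m + 2)! : ℚ) / (2 ^ (m + 1) * m !) = (m + 1) * (2 * m + 1)‼ := by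
  rw [factorial_two_mul_add_two_eq, factorial_succ]
  push_cast
  field_simp

theorem closed_form_eq_doubleFactorial (m : ℕ) :
    ((2 * (m + 1))! : ℚ) / (2 ^ (m + 1) * (m + 1 - 1)!) - 2 ^ (m + 1 - 1) * ((m + 1)! : ℚ) =
      (m + 1) * (2 * m + 1)‼ - 2 ^ m * (m + 1)! := by
  rw [Nat.add_sub_cancel, mul_add_one, cast_factorial_two_mul_add_two_div]

theorem recurrence_term_eq_doubleFactorial (m : ℕ) :
    (3 * ((m + 2 : ℕ) : ℚ) - 2) * ((2 * (m + 2) - 3)! : ℚ) / (2 ^ (m + 2 - 2) * (m + 2 - 2)!) =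
      (3 * m + 4) * (2 * m + 1)‼ := by
  rw [show 2 * (m + 2) - 3 = 2 * m + 1 by omega, Nat.add_sub_cancel, mul_div_assoc,
    cast_factorial_two_mul_add_one_div]
  push_cast
  ring

theorem one_reticulation_networks_closed_form (a : ℕ → ℚ)
    (h2 : a 2 = 2)
    (hrec : ∀ n : ℕ, 3 ≤ n →
      a n = 2 * (n - 1 : ℚ) * a (n - 1) +
        (3 * n - 2 : ℚ) * (Nat.factorial (2 * n - 3) : ℚ) /
          (2 ^ (n - 2) * (Nat.factorial (n - 2))) -
        2 ^ (n - 1) * (Nat.factorial (n - 1) : ℚ)) :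
    ∀ n : ℕ, 2 ≤ n →
      a n = (Nat.factorial (2 * n) : ℚ) / (2 ^ n * (Nat.factorial (n - 1))) -
        2 ^ (n - 1) * (Nat.factorial n : ℚ) := by
  intro n hn
  induction n, hn using Nat.le_induction with
  | base => rw [h2]; norm_num [factorial]
  | succ n hn ih =>
    obtain ⟨m, rfl⟩ : ∃ m, n = m + 1 := ⟨n - 1, by omega⟩
    rw [closed_form_eq_doubleFactorial] at ih
    rw [closed_form_eq_doubleFactorial, hrec (m + 2) (by omega), recurrence_term_eq_doubleFactorial,
      show m + 2 - 1 = m + 1 from rfl, ih, show 2 * (m + 1) + 1 = 2 * m + 1 + 2 by ring,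
      doubleFactorial_add_two, factorial_succ (m + 1)]
    push_cast
    ring
end
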